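/- arXiv:1302.4113 — 4 statements merged into one kernel-verified Lean document; each statement's English description precedes it below -/
import Mathlib

section
/- Let d = d1 + d2 with d1 ≤ d2 integers. The rank-2 bundle E = O(d1) ⊕ O(d2) over P^1 admits an undecomposable quasi-parabolic structure at n ≥ 1 marked points if and only if d2 - d1 ≤ n - 2, except that in the case n = 2 with d1 = d2 every quasi-parabolic structure is decomposable. -/
/-!
Model: a rank-2 bundle `E = O(d1) ⊕ O(d2)` on `P¹` (coordinate `z`, with all
marked points in the affine chart).  A bundle map `O(e) → O(d1) ⊕ O(d2)` is
given by a pair of polynomials `(f, g)` with `deg f ≤ d1 - e`, `deg g ≤ d2 - e`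
(the degree bound encodes the behaviour at `∞`).  A direct-sum decomposition
`E = L₁ ⊕ L₂` with `deg Lⱼ = eⱼ`, `e₁ + e₂ = d1 + d2`, is a pair of such maps
whose determinant is a nonzero constant.  A quasi-parabolic structure is a
rank-1 subspace of the fiber `ℂ²` over each marked point.
-/

/-- `degLE f m`: `f` defines a section of `O(m)` on `P¹`, i.e. `deg f ≤ m`
(so `f = 0` when `m < 0`). -/
def degLE (f : Polynomial ℂ) (m : ℤ) : Prop :=
  ∀ k : ℕ, m < (k : ℤ) → f.coeff k = 0

/-- The fiber at `z` of the line subbundle of `O(d1) ⊕ O(d2)` given by a pair of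
polynomials `(f, g)`. -/
noncomputable def fiber (f g : Polynomial ℂ) (z : ℂ) : Submodule ℂ (Fin 2 → ℂ) :=
  Submodule.span ℂ {![f.eval z, g.eval z]}

/-- The quasi-parabolic structure `l` on `E = O(d1) ⊕ O(d2)` with marked points
`t` is decomposable: `E = L₁ ⊕ L₂` with each parabolic direction `l i` contained
in a factor. -/
def Decomposable (d1 d2 : ℤ) {n : ℕ} (t : Fin n → ℂ)
    (l : Fin n → Submodule ℂ (Fin 2 → ℂ)) : Prop :=
  ∃ (e1 e2 : ℤ) (f1 g1 f2 g2 : Polynomial ℂ),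
    e1 + e2 = d1 + d2 ∧
    degLE f1 (d1 - e1) ∧ degLE g1 (d2 - e1) ∧
    degLE f2 (d1 - e2) ∧ degLE g2 (d2 - e2) ∧
    (∃ c : ℂ, c ≠ 0 ∧ f1 * g2 - g1 * f2 = Polynomial.C c) ∧
    ∀ i, l i = fiber f1 g1 (t i) ∨ l i = fiber f2 g2 (t i)

/-!
By uniqueness of the splitting type, a decomposition of `O(d1) ⊕ O(d2)` consists of a copy of
`O(d1)`, embedded as `(u, g)` with `u` constant and `deg g ≤ d2 - d1`, and a copy of `O(d2)`.
If `d1 < d2` the latter is the vertical line `(0, 1)`, so a structure made of graphs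
`span (1, a i)` is decomposable iff the slopes `a i` are interpolated at the `t i` by a
polynomial of degree `≤ d2 - d1`. Lagrange interpolation makes every structure decomposable
when `n ≤ d2 - d1 + 1`, while the slopes `δ i i₀` are not interpolable otherwise.
If `d1 = d2` both summands are constant lines: any two lines can be split, but `n ≥ 3`
distinct lines cannot.
-/

open Polynomial Submodule Module

section LinearAlgebra

variable {K V : Type*} [Field K] [AddCommGroup V] [Module K V]

lemma Submodule.exists_eq_span_singleton_of_finrank_eq_one [FiniteDimensional K V]
    {L : Submodule K V} (hL : finrank K L = 1) : ∃ v, v ≠ 0 ∧ L = K ∙ v := by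
  obtain ⟨v, hvL, hv⟩ := (Submodule.ne_bot_iff L).mp fun h => by subst h; simp at hL
  refine ⟨v, hv, (eq_of_le_of_finrank_le ((span_singleton_le_iff_mem v L).mpr hvL) ?_).symm⟩
  rw [hL, finrank_span_singleton hv]

lemma exists_linearIndependent_pair_of_finrank_eq_one [FiniteDimensional K V]
    (hV : finrank K V = 2) {L₀ L₁ : Submodule K V} (h₀ : finrank K L₀ = 1)
    (h₁ : finrank K L₁ = 1) :
    ∃ v w, LinearIndependent K ![v, w] ∧ L₀ = K ∙ v ∧ (L₁ = K ∙ v ∨ L₁ = K ∙ w) := by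
  obtain ⟨v, hv, rfl⟩ := exists_eq_span_singleton_of_finrank_eq_one h₀
  obtain ⟨w, hw, hL₁⟩ : ∃ w ∉ K ∙ v, L₁ = K ∙ v ∨ L₁ = K ∙ w := by
    by_cases hL : L₁ = K ∙ v
    · have hne : K ∙ v ≠ ⊤ := fun h => by
        have := finrank_top K V
        rw [← h] at this
        omega
      obtain ⟨w, hw⟩ := SetLike.exists_not_mem_of_ne_top _ hne
      exact ⟨w, hw, .inl hL⟩
    · obtain ⟨w, -, rfl⟩ := exists_eq_span_singleton_of_finrank_eq_one h₁
      refine ⟨w, fun hw => hL ?_, .inr rfl⟩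
      exact eq_of_le_of_finrank_eq ((span_singleton_le_iff_mem w _).mpr hw) (h₁.trans h₀.symm)
  refine ⟨v, w, (LinearIndependent.pair_iff' hv).mpr fun a ha => hw ?_, rfl, hL₁⟩
  exact ha ▸ smul_mem _ a (mem_span_singleton_self v)

end LinearAlgebra

section Plane

variable {K : Type*} [Field K]

lemma det_ne_zero_of_linearIndependent_pair {v w : Fin 2 → K}
    (h : LinearIndependent K ![v, w]) : v 0 * w 1 - v 1 * w 0 ≠ 0 := by
  have := (Matrix.linearIndependent_rows_iff_isUnit (A := Matrix.of ![v, w])).mp h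
  rw [Matrix.isUnit_iff_isUnit_det, Matrix.det_fin_two, isUnit_iff_ne_zero] at this
  simpa using this

lemma span_graph_eq_span_iff {a : K} {v : Fin 2 → K} :
    K ∙ ![1, a] = K ∙ v ↔ v 0 ≠ 0 ∧ v 1 = v 0 * a := by
  constructor
  · intro h
    obtain ⟨s, hs⟩ := mem_span_singleton.mp (h ▸ mem_span_singleton_self ![1, a])
    obtain ⟨r, hr⟩ := mem_span_singleton.mp (h.symm ▸ mem_span_singleton_self v)
    have hs0 := congrFun hs 0
    have hr0 := congrFun hr 0
    have hr1 := congrFun hr 1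
    simp only [Pi.smul_apply, smul_eq_mul, Matrix.cons_val_zero, Matrix.cons_val_one,
      Matrix.cons_val_fin_one, mul_one] at hs0 hr0 hr1
    exact ⟨fun hx => by simp [hx] at hs0, by rw [← hr0, ← hr1]⟩
  · rintro ⟨h0, h1⟩
    rw [← span_singleton_smul_eq (IsUnit.mk0 _ h0)]
    congr 2
    ext i; fin_cases i <;> simp [h1]

lemma span_graph_injective : Function.Injective fun a : K => K ∙ ![1, a] := fun a b h => by
  simpa using (span_graph_eq_span_iff.mp h).2.symm

lemma finrank_span_graph (a : K) : finrank K (K ∙ ![1, a]) = 1 :=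
  finrank_span_singleton fun h => by simpa using congrFun h 0

lemma eq_vertical_or_graph_of_finrank_eq_one {L : Submodule K (Fin 2 → K)}
    (hL : finrank K L = 1) : L = K ∙ ![0, 1] ∨ ∃ a, L = K ∙ ![1, a] := by
  obtain ⟨v, hv, rfl⟩ := exists_eq_span_singleton_of_finrank_eq_one hL
  by_cases h0 : v 0 = 0
  · have h1 : v 1 ≠ 0 := fun h1 => hv (by ext i; fin_cases i <;> simp [h0, h1])
    left
    conv_rhs => rw [← span_singleton_smul_eq (IsUnit.mk0 _ h1)]
    congr 2
    ext i; fin_cases i <;> simp [h0]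
  · exact .inr ⟨v 1 / v 0, (span_graph_eq_span_iff.mpr ⟨h0, by field_simp⟩).symm⟩

end Plane

lemma degLE_natCast_iff {f : ℂ[X]} {m : ℕ} : degLE f m ↔ f.natDegree ≤ m := by
  rw [natDegree_le_iff_coeff_eq_zero]
  exact forall_congr' fun k => by rw [Nat.cast_lt]

lemma degLE.eq_zero {f : ℂ[X]} {m : ℤ} (h : degLE f m) (hm : m < 0) : f = 0 :=
  ext fun k => h k (by omega)

lemma degLE.eq_C {f : ℂ[X]} (h : degLE f 0) : f = C (f.coeff 0) :=
  eq_C_of_natDegree_eq_zero (Nat.le_zero.mp (degLE_natCast_iff (m := 0) |>.mp h))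

lemma degLE_C (c : ℂ) : degLE (C c) 0 :=
  degLE_natCast_iff (m := 0) |>.mpr (natDegree_C c).le

lemma fiber_C_C (v : Fin 2 → ℂ) (z : ℂ) : fiber (C (v 0)) (C (v 1)) z = ℂ ∙ v := by
  simp only [fiber, eval_C]
  congr 2
  ext i; fin_cases i <;> rfl

section Decomposition

variable {n : ℕ} {t : Fin n → ℂ} {l : Fin n → Submodule ℂ (Fin 2 → ℂ)}

lemma splitting_type_eq {d1 d2 e1 e2 : ℤ} {f1 g1 f2 g2 : ℂ[X]} {c : ℂ} (h12 : d1 ≤ d2)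
    (he : e1 + e2 = d1 + d2) (hf1 : degLE f1 (d1 - e1)) (hg1 : degLE g1 (d2 - e1))
    (hf2 : degLE f2 (d1 - e2)) (hg2 : degLE g2 (d2 - e2)) (hc : c ≠ 0)
    (hdet : f1 * g2 - g1 * f2 = C c) : e1 = d1 ∨ e1 = d2 := by
  have hne : f1 * g2 - g1 * f2 ≠ 0 := hdet ▸ C_ne_zero.mpr hc
  by_contra! h
  rcases lt_or_ge d2 e1 with h1 | h1
  · simp [hf1.eq_zero (by omega), hg1.eq_zero (by omega)] at hne
  rcases lt_or_ge d2 e2 with h2 | h2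
  · simp [hf2.eq_zero (by omega), hg2.eq_zero (by omega)] at hne
  · simp [hf1.eq_zero (by omega), hf2.eq_zero (by omega)] at hne

lemma Decomposable.exists_ordered {d1 d2 : ℤ} (h12 : d1 ≤ d2) (h : Decomposable d1 d2 t l) :
    ∃ f1 g1 f2 g2 : ℂ[X], degLE f1 0 ∧ degLE g1 (d2 - d1) ∧ degLE f2 (d1 - d2) ∧
      degLE g2 0 ∧ (∃ c : ℂ, c ≠ 0 ∧ f1 * g2 - g1 * f2 = C c) ∧
      ∀ i, l i = fiber f1 g1 (t i) ∨ l i = fiber f2 g2 (t i) := by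
  obtain ⟨e1, e2, f1, g1, f2, g2, he, hf1, hg1, hf2, hg2, ⟨c, hc, hdet⟩, hl⟩ := h
  rcases splitting_type_eq h12 he hf1 hg1 hf2 hg2 hc hdet with rfl | rfl
  · obtain rfl : e2 = d2 := by omega
    rw [sub_self] at hf1 hg2
    exact ⟨f1, g1, f2, g2, hf1, hg1, hf2, hg2, ⟨c, hc, hdet⟩, hl⟩
  · obtain rfl : e2 = d1 := by omega
    rw [sub_self] at hf2 hg1
    refine ⟨f2, g2, f1, g1, hf2, hg2, hf1, hg1, ⟨-c, neg_ne_zero.mpr hc, ?_⟩,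
      fun i => (hl i).symm⟩
    rw [map_neg, ← hdet]
    ring

lemma Decomposable.exists_interpolating {d : ℤ} {m : ℕ} (hm : 0 < m) {a : Fin n → ℂ}
    (h : Decomposable d (d + m) t fun i => ℂ ∙ ![1, a i]) :
    ∃ g : ℂ[X], g.natDegree ≤ m ∧ ∀ i, g.eval (t i) = a i := by
  obtain ⟨f1, g1, f2, g2, hf1, hg1, hf2, hg2, ⟨c, hc, hdet⟩, hl⟩ := h.exists_ordered (by omega)
  obtain rfl : f2 = 0 := hf2.eq_zero (by omega)
  obtain ⟨u, rfl⟩ : ∃ u, f1 = C u := ⟨_, hf1.eq_C⟩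
  obtain ⟨b, rfl⟩ : ∃ b, g2 = C b := ⟨_, hg2.eq_C⟩
  have hu : u ≠ 0 := by
    rintro rfl
    simp only [map_zero, zero_mul, mul_zero, sub_self] at hdet
    exact hc (C_eq_zero.mp hdet.symm)
  -- The `O(d2)` summand is the vertical line `span (0, b)`, which contains no graph.
  have hg1t : ∀ i, g1.eval (t i) = u * a i := fun i => by
    rcases hl i with h | h
    · simpa [fiber] using (span_graph_eq_span_iff.mp h).2
    · simp [fiber, span_graph_eq_span_iff] at h
  rw [add_sub_cancel_left] at hg1
  exact ⟨C u⁻¹ * g1, natDegree_C_mul_le _ _ |>.trans (degLE_natCast_iff.mp hg1),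
    fun i => by simp [hg1t, hu]⟩

lemma Decomposable.exists_forall_eq_or_eq {d : ℤ} (h : Decomposable d d t l) :
    ∃ A B, ∀ i, l i = A ∨ l i = B := by
  obtain ⟨f1, g1, f2, g2, hf1, hg1, hf2, hg2, -, hl⟩ := h.exists_ordered le_rfl
  rw [sub_self] at hg1 hf2
  rw [hf1.eq_C, hg1.eq_C, hf2.eq_C, hg2.eq_C] at hl
  exact ⟨_, _, fun i => by simpa only [fiber, eval_C] using hl i⟩

lemma decomposable_of_forall_eq_vertical_or_graph {d1 d2 : ℤ} {g : ℂ[X]}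
    (hg : degLE g (d2 - d1))
    (hl : ∀ i, l i = ℂ ∙ ![0, 1] ∨ l i = ℂ ∙ ![1, g.eval (t i)]) :
    Decomposable d1 d2 t l := by
  refine ⟨d1, d2, 1, g, 0, 1, rfl, ?_, hg, fun k _ => coeff_zero k, ?_, ⟨1, one_ne_zero, by simp⟩,
    fun i => by simpa [fiber, or_comm] using hl i⟩ <;>
  simpa using degLE_C 1

lemma decomposable_of_forall_eq_or_eq {d : ℤ} {v w : Fin 2 → ℂ}
    (hvw : LinearIndependent ℂ ![v, w]) (hl : ∀ i, l i = ℂ ∙ v ∨ l i = ℂ ∙ w) :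
    Decomposable d d t l := by
  refine ⟨d, d, C (v 0), C (v 1), C (w 0), C (w 1), rfl, ?_, ?_, ?_, ?_,
    ⟨_, det_ne_zero_of_linearIndependent_pair hvw, by simp only [C_mul, C_sub]⟩,
    fun i => by simpa only [fiber_C_C] using hl i⟩ <;>
  simpa using degLE_C _

lemma decomposable_of_card_le {d : ℤ} {m : ℕ} (hn : n ≤ m + 1) (ht : Function.Injective t)
    (hl : ∀ i, finrank ℂ (l i) = 1) : Decomposable d (d + m) t l := by
  have : ∀ i, ∃ a, l i = ℂ ∙ ![0, 1] ∨ l i = ℂ ∙ ![1, a] := fun i =>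
    (eq_vertical_or_graph_of_finrank_eq_one (hl i)).elim (fun h => ⟨0, .inl h⟩)
      fun ⟨a, h⟩ => ⟨a, .inr h⟩
  choose a ha using this
  have htinj : Set.InjOn t (Finset.univ : Finset (Fin n)) := ht.injOn
  set g := Lagrange.interpolate Finset.univ t a
  have hg : degLE g m := fun k hk => coeff_eq_zero_of_degree_lt <|
    (Lagrange.degree_interpolate_lt a htinj).trans_le <| by
      simp only [Finset.card_univ, Fintype.card_fin, Nat.cast_le]
      omega
  refine decomposable_of_forall_eq_vertical_or_graph (by rwa [add_sub_cancel_left]) fun i => ?_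
  rw [Lagrange.eval_interpolate_at_node a htinj (Finset.mem_univ i)]
  exact ha i

end Decomposition

lemma decomposable_of_card_eq_two {d : ℤ} (t : Fin 2 → ℂ) {l : Fin 2 → Submodule ℂ (Fin 2 → ℂ)}
    (hl : ∀ i, finrank ℂ (l i) = 1) : Decomposable d d t l := by
  obtain ⟨v, w, hvw, h₀, h₁⟩ :=
    exists_linearIndependent_pair_of_finrank_eq_one (by simp) (hl 0) (hl 1)
  refine decomposable_of_forall_eq_or_eq hvw fun i => ?_
  fin_cases i
  exacts [.inl h₀, h₁]

lemma Fintype.card_le_two_of_injective_of_forall_eq_or_eq {α β : Type*} [Fintype α]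
    {f : α → β} (hf : Function.Injective f) {A B : β} (h : ∀ a, f a = A ∨ f a = B) :
    Fintype.card α ≤ 2 := by
  classical
  calc Fintype.card α
      ≤ ({A, B} : Finset β).card :=
        Finset.card_le_card_of_injOn f (fun a _ => by simpa using h a) hf.injOn
    _ ≤ 2 := Finset.card_le_two

lemma not_exists_natDegree_le_eval_eq_single {K : Type*} [Field K] {n m : ℕ}
    (hmn : m + 2 ≤ n) {t : Fin n → K} (ht : Function.Injective t) (i₀ : Fin n) :
    ¬ ∃ g : K[X], g.natDegree ≤ m ∧ ∀ i, g.eval (t i) = (Pi.single i₀ 1 : Fin n → K) i := by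
  rintro ⟨g, hg, hgt⟩
  have hg0 : g = 0 := by
    refine eq_zero_of_natDegree_lt_card_of_eval_eq_zero g (f := fun i : {i // i ≠ i₀} => t i)
      (ht.comp Subtype.val_injective) (fun i => by simp [hgt, Pi.single_eq_of_ne i.2]) ?_
    rw [Fintype.card_subtype_compl, Fintype.card_fin, Fintype.card_unique]
    omega
  simpa [hg0] using hgt i₀

section Undecomposable

variable {n : ℕ} {t : Fin n → ℂ}

lemma not_decomposable_graph_single {d : ℤ} {m : ℕ} (hm : 0 < m) (hmn : m + 2 ≤ n)
    (ht : Function.Injective t) (i₀ : Fin n) :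
    ¬ Decomposable d (d + m) t fun i => ℂ ∙ ![1, (Pi.single i₀ 1 : Fin n → ℂ) i] := fun h =>
  not_exists_natDegree_le_eval_eq_single hmn ht i₀ (h.exists_interpolating hm)

lemma not_decomposable_graph_self {d : ℤ} (hn : 3 ≤ n) (ht : Function.Injective t) :
    ¬ Decomposable d d t fun i => ℂ ∙ ![1, t i] := fun h => by
  obtain ⟨A, B, hAB⟩ := h.exists_forall_eq_or_eq
  have := Fintype.card_le_two_of_injective_of_forall_eq_or_eq (span_graph_injective.comp ht) hAB
  rw [Fintype.card_fin] at this
  omega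

end Undecomposable

theorem stmt0_general (n : ℕ) (d1 d2 : ℤ) (h12 : d1 ≤ d2)
    (t : Fin n → ℂ) (ht : Function.Injective t) :
    (∃ l : Fin n → Submodule ℂ (Fin 2 → ℂ),
        (∀ i, Module.finrank ℂ (l i) = 1) ∧ ¬ Decomposable d1 d2 t l)
      ↔ (d2 - d1 ≤ (n : ℤ) - 2 ∧ ¬ (n = 2 ∧ d1 = d2)) := by
  obtain ⟨m, rfl⟩ := Int.le.dest h12
  constructor
  · rintro ⟨l, hl, hnd⟩
    refine ⟨?_, ?_⟩
    · by_contra hlarge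
      exact hnd (decomposable_of_card_le (by omega) ht hl)
    · rintro ⟨rfl, hm⟩
      obtain rfl : m = 0 := by omega
      exact hnd (by simpa using decomposable_of_card_eq_two t hl)
  · rintro ⟨hmn, hn2⟩
    rcases Nat.eq_zero_or_pos m with rfl | hm
    · exact ⟨fun i => ℂ ∙ ![1, t i], fun i => finrank_span_graph _,
        by simpa using not_decomposable_graph_self (d := d1) (by omega) ht⟩
    · have hmn : m + 2 ≤ n := by omega
      let i₀ : Fin n := ⟨0, by omega⟩
      exact ⟨fun i => ℂ ∙ ![1, (Pi.single i₀ 1 : Fin n → ℂ) i], fun i => finrank_span_graph _,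
        not_decomposable_graph_single hm hmn ht i₀⟩

/-- `E = O(d1) ⊕ O(d2)` (with `d1 ≤ d2`) over `P¹` with `n ≥ 1`
marked points admits an undecomposable quasi-parabolic structure iff
`d2 - d1 ≤ n - 2`, except in the case `n = 2`, `d1 = d2`, where every
quasi-parabolic structure is decomposable. -/
theorem stmt0 (n : ℕ) (hn : 1 ≤ n) (d1 d2 : ℤ) (h12 : d1 ≤ d2)
    (t : Fin n → ℂ) (ht : Function.Injective t) :
    (∃ l : Fin n → Submodule ℂ (Fin 2 → ℂ),
        (∀ i, Module.finrank ℂ (l i) = 1) ∧ ¬ Decomposable d1 d2 t l)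
      ↔ (d2 - d1 ≤ (n : ℤ) - 2 ∧ ¬ (n = 2 ∧ d1 = d2)) :=
  stmt0_general n d1 d2 h12 t ht
end

section
/- An undecomposable quasi-parabolic rank-2 bundle (E, l) of degree d over P^1 with n marked points is w-stable for some choice of weights w ∈ [0,1]^n. -/
/-- A line subbundle `O(e) ↪ O(d1) ⊕ O(d2)`: a nowhere-vanishing pair of
polynomials with the degree bounds of a map `O(e) → E`, saturated (no common
zero at `∞` either). -/
structure LineSub (d1 d2 : ℤ) : Type where
  e : ℤ
  f : Polynomial ℂ
  g : Polynomial ℂ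
  hf : degLE f (d1 - e)
  hg : degLE g (d2 - e)
  nz : ∀ z : ℂ, f.eval z ≠ 0 ∨ g.eval z ≠ 0
  sat : ¬ (degLE f (d1 - e - 1) ∧ degLE g (d2 - e - 1))

open scoped Classical in
/-- The stability index
`Stab(F) = deg E - 2 deg F + Σ_{lᵢ ⊄ F} wᵢ - Σ_{lᵢ ⊂ F} wᵢ`. -/
noncomputable def Stab (d1 d2 : ℤ) {n : ℕ} (t : Fin n → ℂ)
    (l : Fin n → Submodule ℂ (Fin 2 → ℂ)) (w : Fin n → ℝ)
    (F : LineSub d1 d2) : ℝ :=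
  ((d1 + d2 : ℤ) : ℝ) - 2 * (F.e : ℝ)
    + ∑ i, (if l i = fiber F.f F.g (t i) then -(w i) else w i)

/-!
Induct on the number of parabolics. If dropping one of them leaves an undecomposable structure,
give it weight `0`. Otherwise the others are adapted to a splitting `E ≅ L₁ ⊕ L₂`,
`Lₖ ≅ O(eₖ)`, and the remaining direction `l₀` lies on neither summand. Undecomposability forces
more than `e₂ - e₁` parabolics on `L₁`: otherwise shearing `L₁` by `β · L₂`, with `β` of degree
`≤ e₂ - e₁` vanishing at them, would move `L₁` through `l₀` and decompose the structure.
Symmetrically more than `e₁ - e₂` lie on `L₂`. Give `l₀` weight `1/2` and tune the weights on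
`L₁` and `L₂` so that `L₁` and `L₂` themselves are stable. Any other line subbundle `F` has
coordinates in `(L₁, L₂)` of degrees `e₁ - deg F` and `e₂ - deg F`, and their zeros bound the
number of parabolics `F` contains, which gives stability.
-/

open Polynomial Finset

section Degree

variable {f g : ℂ[X]} {m m' : ℤ}

theorem degLE.mono (h : degLE f m) (hm : m ≤ m') : degLE f m' :=
  fun k hk => h k (hm.trans_lt hk)

theorem degLE_zero (m : ℤ) : degLE 0 m :=
  fun k _ => coeff_zero k

theorem degLE_of_natDegree_le (h : (f.natDegree : ℤ) ≤ m) : degLE f m :=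
  fun k hk => coeff_eq_zero_of_natDegree_lt (by omega)

theorem degLE.natDegree_le (hf : degLE f m) (h0 : f ≠ 0) : (f.natDegree : ℤ) ≤ m := by
  by_contra h
  exact leadingCoeff_ne_zero.mpr h0 (hf f.natDegree (by omega))

theorem degLE.add (hf : degLE f m) (hg : degLE g m) : degLE (f + g) m := fun k hk => by
  rw [coeff_add, hf k hk, hg k hk, add_zero]

theorem degLE.sub (hf : degLE f m) (hg : degLE g m) : degLE (f - g) m := fun k hk => by
  rw [coeff_sub, hf k hk, hg k hk, sub_zero]

theorem degLE.C_mul (a : ℂ) (hf : degLE f m) : degLE (C a * f) m := fun k hk => by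
  rw [coeff_C_mul, hf k hk, mul_zero]

theorem degLE.mul (hf : degLE f m) (hg : degLE g m') : degLE (f * g) (m + m') := fun k hk => by
  rw [coeff_mul]
  refine sum_eq_zero fun ⟨i, j⟩ hij => ?_
  have hk : (i : ℤ) + j = k := by exact_mod_cast mem_antidiagonal.mp hij
  by_cases hi : m < i
  · rw [hf i hi, zero_mul]
  · rw [hg j (by omega), mul_zero]

theorem degLE_prod_X_sub_C {ι : Type*} (t : ι → ℂ) (S : Finset ι) :
    degLE (∏ j ∈ S, (X - C (t j))) #S :=
  degLE_of_natDegree_le (by rw [natDegree_finsetProd_X_sub_C_eq_card])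

theorem card_le_of_degLE {ι : Type*} {t : ι → ℂ} (ht : Function.Injective t) {S : Finset ι}
    (hf : degLE f m) (h0 : f ≠ 0) (hroot : ∀ j ∈ S, f.eval (t j) = 0) : (#S : ℤ) ≤ m := by
  have hsub : (S.image t).val ⊆ f.roots := fun z hz => by
    obtain ⟨j, hj, rfl⟩ := mem_image.mp hz
    exact (mem_roots h0).mpr (hroot j hj)
  have := card_le_degree_of_subset_roots hsub
  rw [card_image_of_injective S ht] at this
  exact (Nat.cast_le.mpr this).trans (hf.natDegree_le h0)

end Degree

section Fiber

noncomputable def wedge (f g p q : ℂ[X]) : ℂ[X] := f * q - g * p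

@[simp]
theorem eval_wedge (f g p q : ℂ[X]) (z : ℂ) :
    (wedge f g p q).eval z = f.eval z * q.eval z - g.eval z * p.eval z := by
  simp [wedge]

theorem fiber_eq_of_eval_eq_smul {f g p q : ℂ[X]} {z a : ℂ} (ha : a ≠ 0)
    (hp : p.eval z = a * f.eval z) (hq : q.eval z = a * g.eval z) :
    fiber p q z = fiber f g z := by
  have hv : ![p.eval z, q.eval z] = a • ![f.eval z, g.eval z] := by
    ext i; fin_cases i <;> simp [hp, hq]
  rw [fiber, fiber, hv, Submodule.span_singleton_smul_eq (isUnit_iff_ne_zero.mpr ha)]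

theorem eval_wedge_eq_zero_of_fiber_eq {f g p q : ℂ[X]} {z : ℂ}
    (h : fiber f g z = fiber p q z) : (wedge f g p q).eval z = 0 := by
  have hmem : ![p.eval z, q.eval z] ∈ fiber f g z := by
    rw [h]; exact Submodule.mem_span_singleton_self _
  obtain ⟨a, ha⟩ := Submodule.mem_span_singleton.mp hmem
  have hp : a * f.eval z = p.eval z := by simpa using congrFun ha 0
  have hq : a * g.eval z = q.eval z := by simpa using congrFun ha 1
  rw [eval_wedge, ← hp, ← hq]
  ring

theorem exists_eq_fiber_C {p : Submodule ℂ (Fin 2 → ℂ)} (hp : Module.finrank ℂ p = 1) :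
    ∃ a b : ℂ, (a ≠ 0 ∨ b ≠ 0) ∧ ∀ z, p = fiber (C a) (C b) z := by
  obtain ⟨x, hxp, hx0, hle⟩ :=
    (rank_submodule_eq_one_iff p).mp (Module.rank_eq_one_iff_finrank_eq_one.mpr hp)
  refine ⟨x 0, x 1, ?_, fun z => ?_⟩
  · by_contra! h
    exact hx0 (by ext i; fin_cases i <;> simp [h])
  · have hx : ![x 0, x 1] = x := by ext i; fin_cases i <;> rfl
    rw [fiber, eval_C, eval_C, hx]
    exact le_antisymm hle ((Submodule.span_singleton_le_iff_mem x p).mpr hxp)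

end Fiber

/-- A splitting `E ≅ L₁ ⊕ L₂`, `Lₖ ≅ O(eₖ)` embedded by `(fₖ, gₖ)`: the constant nonzero
determinant makes the sum direct at every point, `∞` included. -/
structure Splitting (d1 d2 : ℤ) where
  e1 : ℤ
  e2 : ℤ
  f1 : ℂ[X]
  g1 : ℂ[X]
  f2 : ℂ[X]
  g2 : ℂ[X]
  c : ℂ
  e1_add_e2 : e1 + e2 = d1 + d2
  degLE_f1 : degLE f1 (d1 - e1)
  degLE_g1 : degLE g1 (d2 - e1)
  degLE_f2 : degLE f2 (d1 - e2)
  degLE_g2 : degLE g2 (d2 - e2)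
  c_ne_zero : c ≠ 0
  wedge_eq : wedge f1 g1 f2 g2 = C c

namespace Splitting

variable {d1 d2 : ℤ} {n : ℕ} (s : Splitting d1 d2)

def IsAdapted (t : Fin n → ℂ) (l : Fin n → Submodule ℂ (Fin 2 → ℂ)) : Prop :=
  ∀ i, l i = fiber s.f1 s.g1 (t i) ∨ l i = fiber s.f2 s.g2 (t i)

protected noncomputable def trivial (d1 d2 : ℤ) : Splitting d1 d2 where
  e1 := d1
  e2 := d2
  f1 := 1
  g1 := 0
  f2 := 0
  g2 := 1
  c := 1
  e1_add_e2 := rfl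
  degLE_f1 := degLE_of_natDegree_le (by simp)
  degLE_g1 := degLE_zero _
  degLE_f2 := degLE_zero _
  degLE_g2 := degLE_of_natDegree_le (by simp)
  c_ne_zero := one_ne_zero
  wedge_eq := by simp [wedge]

noncomputable def swap : Splitting d1 d2 where
  e1 := s.e2
  e2 := s.e1
  f1 := s.f2
  g1 := s.g2
  f2 := s.f1
  g2 := s.g1
  c := -s.c
  e1_add_e2 := by rw [add_comm, s.e1_add_e2]
  degLE_f1 := s.degLE_f2
  degLE_g1 := s.degLE_g2
  degLE_f2 := s.degLE_f1
  degLE_g2 := s.degLE_g1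
  c_ne_zero := neg_ne_zero.mpr s.c_ne_zero
  wedge_eq := by rw [map_neg, ← s.wedge_eq, wedge, wedge]; ring

noncomputable def shear {lam : ℂ} (hlam : lam ≠ 0) {h : ℂ[X]} (hh : degLE h (s.e2 - s.e1)) :
    Splitting d1 d2 :=
  { s with
    f1 := C lam * s.f1 + h * s.f2
    g1 := C lam * s.g1 + h * s.g2
    c := lam * s.c
    degLE_f1 := (s.degLE_f1.C_mul lam).add ((hh.mul s.degLE_f2).mono (by omega))
    degLE_g1 := (s.degLE_g1.C_mul lam).add ((hh.mul s.degLE_g2).mono (by omega))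
    c_ne_zero := mul_ne_zero hlam s.c_ne_zero
    wedge_eq := by
      rw [C_mul, ← s.wedge_eq]
      simp only [wedge]
      ring }

theorem eval_wedge_eq (z : ℂ) :
    s.f1.eval z * s.g2.eval z - s.g1.eval z * s.f2.eval z = s.c := by
  simpa using congrArg (eval z) s.wedge_eq

theorem fiber_fst_ne_fiber_snd (z : ℂ) : fiber s.f1 s.g1 z ≠ fiber s.f2 s.g2 z := fun h =>
  s.c_ne_zero (by rw [← s.eval_wedge_eq z, ← eval_wedge, eval_wedge_eq_zero_of_fiber_eq h])

/-- Cramer's rule in the frame `(L₁, L₂)`. -/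
theorem c_mul_eval (p q : ℂ[X]) (z : ℂ) :
    s.c * p.eval z = (wedge s.f1 s.g1 p q).eval z * s.f2.eval z
        - (wedge s.f2 s.g2 p q).eval z * s.f1.eval z ∧
      s.c * q.eval z = (wedge s.f1 s.g1 p q).eval z * s.g2.eval z
        - (wedge s.f2 s.g2 p q).eval z * s.g1.eval z := by
  simp only [eval_wedge]
  constructor
  · linear_combination -(p.eval z) * s.eval_wedge_eq z
  · linear_combination -(q.eval z) * s.eval_wedge_eq z

theorem exists_fiber_fst_eq {z0 : ℂ} {p : Submodule ℂ (Fin 2 → ℂ)}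
    (hp : Module.finrank ℂ p = 1) (hp2 : p ≠ fiber s.f2 s.g2 z0) {β : ℂ[X]}
    (hβ : degLE β (s.e2 - s.e1)) (hβz0 : β.eval z0 ≠ 0) :
    ∃ s' : Splitting d1 d2, s'.f2 = s.f2 ∧ s'.g2 = s.g2 ∧ fiber s'.f1 s'.g1 z0 = p ∧
      ∀ z, β.eval z = 0 → fiber s'.f1 s'.g1 z = fiber s.f1 s.g1 z := by
  obtain ⟨a, b, hab, hpab⟩ := exists_eq_fiber_C hp
  obtain ⟨ha, hb⟩ := s.c_mul_eval (C a) (C b) z0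
  simp only [eval_C] at ha hb
  set W1 := (wedge s.f1 s.g1 (C a) (C b)).eval z0
  set W2 := (wedge s.f2 s.g2 (C a) (C b)).eval z0
  have hW2 : W2 ≠ 0 := by
    intro hW2
    rw [hW2, zero_mul, sub_zero] at ha hb
    have hW1 : W1 ≠ 0 := by
      rintro hW1
      rw [hW1, zero_mul] at ha hb
      rcases hab with h | h <;> simp_all [s.c_ne_zero]
    refine hp2 ((hpab z0).trans (fiber_eq_of_eval_eq_smul (a := W1 / s.c)
      (div_ne_zero hW1 s.c_ne_zero) ?_ ?_))
    · rw [eval_C, div_mul_eq_mul_div, eq_div_iff s.c_ne_zero]; linear_combination ha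
    · rw [eval_C, div_mul_eq_mul_div, eq_div_iff s.c_ne_zero]; linear_combination hb
  -- by Cramer's rule this shear equals `c • (a, b)` at `z₀`, and `-W₂(z₀) • L₁` where `β = 0`
  refine ⟨s.shear (neg_ne_zero.mpr hW2) (hβ.C_mul (W1 / β.eval z0)), rfl, rfl, ?_, fun z hz => ?_⟩
  · rw [hpab z0]
    refine fiber_eq_of_eval_eq_smul s.c_ne_zero ?_ ?_ <;>
      simp only [shear, eval_add, eval_mul, eval_C] <;> field_simp
    · linear_combination -ha
    · linear_combination -hb
  · refine fiber_eq_of_eval_eq_smul (neg_ne_zero.mpr hW2) ?_ ?_ <;> simp [shear, hz]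

end Splitting

section Incidence

variable {d1 d2 : ℤ} {n : ℕ} {t : Fin n → ℂ} {l : Fin n → Submodule ℂ (Fin 2 → ℂ)}

theorem decomposable_iff :
    Decomposable d1 d2 t l ↔ ∃ s : Splitting d1 d2, s.IsAdapted t l := by
  constructor
  · rintro ⟨e1, e2, f1, g1, f2, g2, he, h1, h2, h3, h4, ⟨c, hc, hw⟩, hl⟩
    exact ⟨⟨e1, e2, f1, g1, f2, g2, c, he, h1, h2, h3, h4, hc, hw⟩, hl⟩
  · rintro ⟨s, hs⟩
    exact ⟨s.e1, s.e2, s.f1, s.g1, s.f2, s.g2, s.e1_add_e2, s.degLE_f1, s.degLE_g1, s.degLE_f2,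
      s.degLE_g2, ⟨s.c, s.c_ne_zero, s.wedge_eq⟩, hs⟩

open scoped Classical in
noncomputable def incident (t : Fin n → ℂ) (l : Fin n → Submodule ℂ (Fin 2 → ℂ))
    (f g : ℂ[X]) : Finset (Fin n) :=
  univ.filter fun j => l j = fiber f g (t j)

@[simp]
theorem mem_incident {f g : ℂ[X]} {j : Fin n} : j ∈ incident t l f g ↔ l j = fiber f g (t j) := by
  simp [incident]

theorem card_incident_inter_le (ht : Function.Injective t) {f g p q : ℂ[X]} {m : ℤ}
    (hw : degLE (wedge f g p q) m) (hw0 : wedge f g p q ≠ 0) :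
    (#(incident t l p q ∩ incident t l f g) : ℤ) ≤ m :=
  card_le_of_degLE ht hw hw0 fun j hj => by
    rw [mem_inter, mem_incident, mem_incident] at hj
    exact eval_wedge_eq_zero_of_fiber_eq (hj.2.symm.trans hj.1)

namespace Splitting

variable (s : Splitting d1 d2)

theorem disjoint_incident : Disjoint (incident t l s.f1 s.g1) (incident t l s.f2 s.g2) :=
  disjoint_left.mpr fun j h1 h2 => s.fiber_fst_ne_fiber_snd (t j)
    ((mem_incident.mp h1).symm.trans (mem_incident.mp h2))

/-- If at most `e₂ - e₁` parabolics lie on `L₁`, then `L₁` can be sheared along `L₂` through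
the single parabolic `l i₀` off `L₁ ∪ L₂`, keeping the others. -/
theorem lt_card_incident_fst (ht : Function.Injective t) {i0 : Fin n}
    (hl : Module.finrank ℂ (l i0) = 1) (hund : ¬ Decomposable d1 d2 t l)
    (hcov : ∀ j ≠ i0, l j = fiber s.f1 s.g1 (t j) ∨ l j = fiber s.f2 s.g2 (t j))
    (hi2 : l i0 ≠ fiber s.f2 s.g2 (t i0)) :
    s.e2 - s.e1 < #(incident t l s.f1 s.g1) := by
  by_contra! hle
  set S := (incident t l s.f1 s.g1).erase i0
  have hβ : degLE (∏ j ∈ S, (X - C (t j))) (s.e2 - s.e1) :=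
    (degLE_prod_X_sub_C t S).mono (by have : #S ≤ #(incident t l s.f1 s.g1) := card_erase_le; omega)
  have hβi0 : (∏ j ∈ S, (X - C (t j))).eval (t i0) ≠ 0 := by
    rw [eval_prod, prod_ne_zero_iff]
    intro j hj
    simpa [sub_eq_zero] using ht.ne (ne_of_mem_erase hj).symm
  obtain ⟨s', hf2, hg2, hfib0, hfib⟩ := s.exists_fiber_fst_eq hl hi2 hβ hβi0
  refine hund (decomposable_iff.mpr ⟨s', fun j => ?_⟩)
  rw [hf2, hg2]
  by_cases hj : j = i0
  · subst hj
    exact Or.inl hfib0.symm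
  by_cases hjA : l j = fiber s.f1 s.g1 (t j)
  · refine Or.inl (hjA.trans (hfib _ ?_).symm)
    rw [eval_prod]
    exact prod_eq_zero (mem_erase.mpr ⟨hj, mem_incident.mpr hjA⟩) (by simp)
  · exact Or.inr ((hcov j hj).resolve_left hjA)

theorem degLE_wedge_fst (F : LineSub d1 d2) :
    degLE (wedge s.f1 s.g1 F.f F.g) (s.e2 - F.e) := by
  have := s.e1_add_e2
  exact ((s.degLE_f1.mul F.hg).mono (by omega)).sub ((s.degLE_g1.mul F.hf).mono (by omega))

theorem eval_wedge_ne_zero_or (F : LineSub d1 d2) (z : ℂ) :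
    (wedge s.f1 s.g1 F.f F.g).eval z ≠ 0 ∨ (wedge s.f2 s.g2 F.f F.g).eval z ≠ 0 := by
  by_contra! h
  obtain ⟨hp, hq⟩ := s.c_mul_eval F.f F.g z
  rw [h.1, h.2] at hp hq
  rcases F.nz z with h' | h' <;> simp_all [s.c_ne_zero]

theorem e_le_and_fiber_eq_of_wedge_eq_zero (F : LineSub d1 d2)
    (h : wedge s.f1 s.g1 F.f F.g = 0) :
    F.e ≤ s.e1 ∧ ∀ z, fiber F.f F.g z = fiber s.f1 s.g1 z := by
  have hW2 (z : ℂ) : (wedge s.f2 s.g2 F.f F.g).eval z ≠ 0 :=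
    (s.eval_wedge_ne_zero_or F z).resolve_left (by simp [h])
  refine ⟨?_, fun z => ?_⟩
  · have h0 : wedge s.f2 s.g2 F.f F.g ≠ 0 := fun h0 => hW2 0 (by simp [h0])
    have := (s.swap.degLE_wedge_fst F).natDegree_le h0
    simp only [swap] at this
    omega
  · obtain ⟨hp, hq⟩ := s.c_mul_eval F.f F.g z
    rw [h, eval_zero, zero_mul, zero_sub] at hp hq
    refine fiber_eq_of_eval_eq_smul (a := -(wedge s.f2 s.g2 F.f F.g).eval z / s.c)
      (div_ne_zero (neg_ne_zero.mpr (hW2 z)) s.c_ne_zero) ?_ ?_ <;>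
      rw [div_mul_eq_mul_div, eq_div_iff s.c_ne_zero]
    · linear_combination hp
    · linear_combination hq

theorem incident_eq_or_card_inter_le (ht : Function.Injective t) (F : LineSub d1 d2) :
    (incident t l F.f F.g = incident t l s.f1 s.g1 ∧ F.e ≤ s.e1) ∨
      (incident t l F.f F.g = incident t l s.f2 s.g2 ∧ F.e ≤ s.e2) ∨
      ((#(incident t l F.f F.g ∩ incident t l s.f1 s.g1) : ℤ) ≤ s.e2 - F.e ∧
        (#(incident t l F.f F.g ∩ incident t l s.f2 s.g2) : ℤ) ≤ s.e1 - F.e) := by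
  by_cases h1 : wedge s.f1 s.g1 F.f F.g = 0
  · obtain ⟨hm, hfib⟩ := s.e_le_and_fiber_eq_of_wedge_eq_zero F h1
    exact Or.inl ⟨by ext j; simp [hfib], hm⟩
  by_cases h2 : wedge s.f2 s.g2 F.f F.g = 0
  · obtain ⟨hm, hfib⟩ := s.swap.e_le_and_fiber_eq_of_wedge_eq_zero F h2
    exact Or.inr (Or.inl ⟨by ext j; simp [hfib, swap], hm⟩)
  exact Or.inr (Or.inr ⟨card_incident_inter_le ht (s.degLE_wedge_fst F) h1,
    card_incident_inter_le ht (s.swap.degLE_wedge_fst F) h2⟩)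

end Splitting

end Incidence

section Weights

variable {Q : ℤ} {a b : ℕ} {u v : ℝ}

/-- The conditions on weights `u` on the `a` parabolics lying on `L₁` and `v` on the `b` lying on
`L₂`, where `Q = e₂ - e₁`: a line subbundle of degree `m` not equal to `L₁` or `L₂` has
coordinates of degrees `a₁ = e₁ - m`, `a₂ = e₂ - m` in `(L₁, L₂)`, and passes through at most
`sA ≤ a₂` of the first and `sB ≤ a₁` of the second parabolics. -/
def WeightsFit (Q : ℤ) (a b : ℕ) (u v : ℝ) : Prop :=
  u ∈ Set.Icc (0 : ℝ) 1 ∧ v ∈ Set.Icc (0 : ℝ) 1 ∧ a * u - b * v = Q ∧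
    ∀ (a1 a2 : ℤ) (sA sB : ℕ), a2 - a1 = Q → sA ≤ a2 → sA ≤ a → sB ≤ a1 → sB ≤ b →
      1 / 2 < a1 + a2 + u * (a - 2 * sA) + v * (b - 2 * sB)

theorem WeightsFit.swap (h : WeightsFit Q a b u v) : WeightsFit (-Q) b a v u := by
  obtain ⟨hu, hv, hQ, hfit⟩ := h
  refine ⟨hv, hu, by push_cast; linarith, fun a1 a2 sA sB h12 hA ha hB hb => ?_⟩
  have := hfit a2 a1 sB sA (by omega) hB hb hA ha
  linarith

theorem exists_weightsFit_of_nonneg (hQ : 0 ≤ Q) (ha : Q < a) (hb : -Q < b) :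
    ∃ u v, WeightsFit Q a b u v := by
  have ha1 : (1 : ℝ) ≤ a := by exact_mod_cast (show 1 ≤ a by omega)
  rcases hQ.eq_or_lt with rfl | hQ1
  · have hb1 : (1 : ℝ) ≤ b := by exact_mod_cast (show 1 ≤ b by omega)
    refine ⟨1 / (2 * a), 1 / (2 * b), ⟨by positivity, ?_⟩, ⟨by positivity, ?_⟩, ?_,
      fun a1 a2 sA sB h12 hA ha hB hb => ?_⟩
    · rw [div_le_one (by positivity)]; linarith
    · rw [div_le_one (by positivity)]; linarith
    · field_simp; push_cast; ring
    have huA : 1 / (2 * a) * (a - 2 * sA : ℝ) = 1 / 2 - sA / a := by field_simp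
    have hvB : 1 / (2 * b) * (b - 2 * sB : ℝ) = 1 / 2 - sB / b := by field_simp
    rw [huA, hvB]
    rcases (show a1 = 0 ∨ 1 ≤ a1 by omega) with h0 | h1
    · obtain ⟨rfl, rfl⟩ : sA = 0 ∧ sB = 0 := by omega
      simp [show a2 = 0 by omega, h0]
    · have hA1 : (sA / a : ℝ) ≤ 1 := div_le_one_of_le₀ (by exact_mod_cast ha) (by positivity)
      have hB1 : (sB / b : ℝ) ≤ 1 := div_le_one_of_le₀ (by exact_mod_cast hb) (by positivity)
      have : (1 : ℝ) ≤ a1 := by exact_mod_cast h1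
      have : (a2 : ℝ) = a1 := by exact_mod_cast (show a2 = a1 by omega)
      linarith
  · refine ⟨Q / a, 0, ⟨by positivity, ?_⟩, ⟨le_rfl, zero_le_one⟩, ?_,
      fun a1 a2 sA sB h12 hA ha hB hb => ?_⟩
    · rw [div_le_one (by positivity)]; exact_mod_cast ha.le
    · field_simp; ring
    have key : (a : ℤ) < 4 * (a1 * a + Q * (a - sA)) := by
      rcases (show a1 = 0 ∨ 1 ≤ a1 by omega) with h0 | h1
      · subst h0
        nlinarith
      · nlinarith
    have hexp : (a1 + a2 + Q / a * (a - 2 * sA) + 0 * (b - 2 * sB) : ℝ)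
        = 2 * ((a1 * a + Q * (a - sA) : ℤ) : ℝ) / a := by
      have : (a2 : ℝ) = a1 + Q := by exact_mod_cast (show a2 = a1 + Q by omega)
      rw [this]; push_cast; field_simp; ring
    rw [hexp, lt_div_iff₀ (by positivity)]
    have : (a : ℝ) < 4 * ((a1 * a + Q * (a - sA) : ℤ) : ℝ) := by exact_mod_cast key
    linarith

theorem exists_weightsFit (ha : Q < a) (hb : -Q < b) : ∃ u v, WeightsFit Q a b u v := by
  rcases le_total 0 Q with hQ | hQ
  · exact exists_weightsFit_of_nonneg hQ ha hb
  · obtain ⟨u, v, h⟩ := exists_weightsFit_of_nonneg (Q := -Q) (a := b) (b := a)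
      (by omega) (by omega) (by omega)
    exact ⟨v, u, by simpa using h.swap⟩

end Weights

section Stability

variable {d1 d2 : ℤ} {n : ℕ} {t : Fin n → ℂ} {l : Fin n → Submodule ℂ (Fin 2 → ℂ)}

def HasStableWeights (d1 d2 : ℤ) (t : Fin n → ℂ) (l : Fin n → Submodule ℂ (Fin 2 → ℂ)) :
    Prop :=
  ∃ w : Fin n → ℝ, (∀ i, w i ∈ Set.Icc (0 : ℝ) 1) ∧ ∀ F : LineSub d1 d2, 0 < Stab d1 d2 t l w F

theorem stab_eq (w : Fin n → ℝ) (F : LineSub d1 d2) :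
    Stab d1 d2 t l w F = ((d1 + d2 : ℤ) : ℝ) - 2 * F.e + ∑ i, w i
      - 2 * ∑ i ∈ incident t l F.f F.g, w i := by
  rw [Stab, incident, sum_ite, sum_neg_distrib,
    ← sum_filter_add_sum_filter_not univ (fun i => l i = fiber F.f F.g (t i)) w]
  ring

theorem HasStableWeights.of_succAbove {t : Fin (n + 1) → ℂ}
    {l : Fin (n + 1) → Submodule ℂ (Fin 2 → ℂ)} (i : Fin (n + 1))
    (h : HasStableWeights d1 d2 (t ∘ i.succAbove) (l ∘ i.succAbove)) :
    HasStableWeights d1 d2 t l := by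
  obtain ⟨w, hw, hstab⟩ := h
  refine ⟨i.insertNth 0 w, (Fin.forall_iff_succAbove i).mpr ⟨by simp, fun k => by simpa using hw k⟩,
    fun F => ?_⟩
  convert hstab F using 1
  simp [Stab, Fin.sum_univ_succAbove _ i]

end Stability

namespace Splitting

variable {d1 d2 : ℤ} {n : ℕ} {t : Fin n → ℂ} {l : Fin n → Submodule ℂ (Fin 2 → ℂ)}
  (s : Splitting d1 d2)

theorem hasStableWeights (ht : Function.Injective t) {i0 : Fin n}
    (hcov : ∀ j ≠ i0, l j = fiber s.f1 s.g1 (t j) ∨ l j = fiber s.f2 s.g2 (t j))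
    (hi1 : l i0 ≠ fiber s.f1 s.g1 (t i0)) (hi2 : l i0 ≠ fiber s.f2 s.g2 (t i0))
    (hA : s.e2 - s.e1 < #(incident t l s.f1 s.g1))
    (hB : s.e1 - s.e2 < #(incident t l s.f2 s.g2)) :
    HasStableWeights d1 d2 t l := by
  set A := incident t l s.f1 s.g1
  set B := incident t l s.f2 s.g2
  obtain ⟨u, v, ⟨hu0, hu1⟩, ⟨hv0, hv1⟩, hQ, hfit⟩ :=
    exists_weightsFit hA (show -(s.e2 - s.e1) < #B by omega)
  have hAB : Disjoint A B := s.disjoint_incident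
  have hi0A : i0 ∉ A := fun h => hi1 (mem_incident.mp h)
  have hi0B : i0 ∉ B := fun h => hi2 (mem_incident.mp h)
  set w : Fin n → ℝ := fun j =>
    (if j ∈ A then u else 0) + (if j ∈ B then v else 0) + if j = i0 then 1 / 2 else 0
  have hsum (S : Finset (Fin n)) :
      ∑ j ∈ S, w j = u * #(S ∩ A) + v * #(S ∩ B) + if i0 ∈ S then 1 / 2 else 0 := by
    simp only [w, sum_add_distrib, sum_ite_mem, sum_ite_eq', sum_const, nsmul_eq_mul]
    ring
  have he : ((d1 + d2 : ℤ) : ℝ) = s.e1 + s.e2 := by exact_mod_cast s.e1_add_e2.symm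
  refine ⟨w, fun j => ?_, fun F => ?_⟩
  · have hjAB : j ∈ A → j ∉ B := fun h => disjoint_left.mp hAB h
    by_cases hj : j = i0
    · subst hj
      norm_num [w, hi0A, hi0B]
    by_cases hjA : j ∈ A
    · simp [w, hjA, hjAB hjA, hj, hu0, hu1]
    · by_cases hjB : j ∈ B <;> simp [w, hjA, hjB, hj, hv0, hv1]
  rw [stab_eq, hsum, hsum, univ_inter, univ_inter, if_pos (mem_univ _), he]
  rcases s.incident_eq_or_card_inter_le ht F with ⟨hF, hm⟩ | ⟨hF, hm⟩ | ⟨hsA, hsB⟩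
  · rw [hF, inter_self, disjoint_iff_inter_eq_empty.mp hAB, card_empty, if_neg hi0A]
    have : (F.e : ℝ) ≤ s.e1 := by exact_mod_cast hm
    push_cast at hQ ⊢
    linarith
  · rw [hF, inter_self, disjoint_iff_inter_eq_empty.mp hAB.symm, card_empty, if_neg hi0B]
    have : (F.e : ℝ) ≤ s.e2 := by exact_mod_cast hm
    push_cast at hQ ⊢
    linarith
  set I := incident t l F.f F.g
  have := hfit (s.e1 - F.e) (s.e2 - F.e) #(I ∩ A) #(I ∩ B) (by ring) hsA
    (card_le_card inter_subset_right) hsB (card_le_card inter_subset_right)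
  have hi : (if i0 ∈ I then 1 / 2 else 0 : ℝ) ≤ 1 / 2 := by split_ifs <;> norm_num
  push_cast at this
  linarith

theorem hasStableWeights_of_isAdapted_off (ht : Function.Injective t) {i0 : Fin n}
    (hl : Module.finrank ℂ (l i0) = 1) (hund : ¬ Decomposable d1 d2 t l)
    (hcov : ∀ j ≠ i0, l j = fiber s.f1 s.g1 (t j) ∨ l j = fiber s.f2 s.g2 (t j)) :
    HasStableWeights d1 d2 t l := by
  have hi0 (h : l i0 = fiber s.f1 s.g1 (t i0) ∨ l i0 = fiber s.f2 s.g2 (t i0)) : False :=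
    hund (decomposable_iff.mpr ⟨s, fun j => if hj : j = i0 then hj ▸ h else hcov j hj⟩)
  have hi1 : l i0 ≠ fiber s.f1 s.g1 (t i0) := fun h => hi0 (Or.inl h)
  have hi2 : l i0 ≠ fiber s.f2 s.g2 (t i0) := fun h => hi0 (Or.inr h)
  exact s.hasStableWeights ht hcov hi1 hi2 (s.lt_card_incident_fst ht hl hund hcov hi2)
    (s.swap.lt_card_incident_fst ht hl hund (fun j hj => (hcov j hj).symm) hi1)

end Splitting

/-- an undecomposable quasi-parabolic rank-2 bundle of degree `d`
over `P¹` with `n` marked points is `w`-stable for some choice of weights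
`w ∈ [0,1]ⁿ`. -/
theorem stmt2 (n : ℕ) (d1 d2 : ℤ) (t : Fin n → ℂ) (ht : Function.Injective t)
    (l : Fin n → Submodule ℂ (Fin 2 → ℂ))
    (hl : ∀ i, Module.finrank ℂ (l i) = 1)
    (hund : ¬ Decomposable d1 d2 t l) :
    ∃ w : Fin n → ℝ, (∀ i, w i ∈ Set.Icc (0 : ℝ) 1) ∧
      ∀ F : LineSub d1 d2, 0 < Stab d1 d2 t l w F := by
  induction n with
  | zero => exact absurd (decomposable_iff.mpr ⟨Splitting.trivial d1 d2, finZeroElim⟩) hund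
  | succ n ih =>
    by_cases hD : Decomposable d1 d2 (t ∘ Fin.succAbove 0) (l ∘ Fin.succAbove 0)
    · obtain ⟨s, hs⟩ := decomposable_iff.mp hD
      refine s.hasStableWeights_of_isAdapted_off ht (hl 0) hund fun j hj => ?_
      obtain ⟨k, rfl⟩ := Fin.exists_succAbove_eq hj
      exact hs k
    · exact HasStableWeights.of_succAbove 0
        (ih _ (ht.comp Fin.succAbove_right_injective) _ (fun i => hl _) hD)
end

section
/- Let (E, l) be a rank-2 parabolic bundle over P^1 of degree -1 with E = O ⊕ O(-1), with no parabolic direction l_i lying in O. Then the linear map Θ ↦ φ_Θ from H^0(End(E, l) ⊗ Ω^1(D)) to H^0(P^1, O(-1) ⊗ Ω^1(D)), sending a parabolic Higgs field to the (2,1)-component of its matrix (the apparent map), is injective. -/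
/-- The residue conditions of a parabolic Higgs field on `(E, l)`: at each `tᵢ`
the residue is nilpotent with image in `lᵢ` and kills `lᵢ`. -/
def IsParabolicHiggs (n : ℕ) (t : Fin n → ℂ) (v : Fin n → Fin 2 → ℂ)
    (A B G D' : Polynomial ℂ) : Prop :=
  degLE A ((n : ℤ) - 2) ∧ degLE B ((n : ℤ) - 1) ∧
  degLE G ((n : ℤ) - 3) ∧ degLE D' ((n : ℤ) - 2) ∧
  ∀ i, (Matrix.of ![![A.eval (t i), B.eval (t i)],
                    ![G.eval (t i), D'.eval (t i)]]).mulVec (v i) = 0 ∧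
    ∀ u : Fin 2 → ℂ, ∃ c : ℂ,
      (Matrix.of ![![A.eval (t i), B.eval (t i)],
                   ![G.eval (t i), D'.eval (t i)]]).mulVec u = c • v i

lemma vanish_aux (n : ℕ) (t : Fin n → ℂ) (ht : Function.Injective t)
    (f : Polynomial ℂ) (hf : degLE f ((n : ℤ) - 1))
    (hz : ∀ i, f.eval (t i) = 0) : f = 0 := by
  by_cases h0 : f = 0
  · exact h0
  · refine Polynomial.eq_zero_of_natDegree_lt_card_of_eval_eq_zero f ht hz ?_
    rw [Fintype.card_fin]
    by_contra hlt
    push_neg at hlt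
    have : ((n : ℤ) - 1) < (f.natDegree : ℤ) := by
      omega
    exact h0 (Polynomial.leadingCoeff_eq_zero.mp (hf f.natDegree this))

/-- for a parabolic bundle `(E, l)` of degree `-1` with
`E = O ⊕ O(-1)` and no parabolic direction lying in `O` (i.e. `v i` is not
proportional to `![1,0]`, that is `v i 1 ≠ 0`), the linear map
`Θ ↦ φ_Θ = γ` from `H⁰(End(E, l) ⊗ Ω¹(D))` to `H⁰(O(-1) ⊗ Ω¹(D)) ≅ H⁰(O(n-3))`
is injective: two parabolic Higgs fields with the same `(2,1)`-component are
equal. -/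
theorem stmt5 (n : ℕ) (t : Fin n → ℂ) (ht : Function.Injective t)
    (v : Fin n → Fin 2 → ℂ) (hv : ∀ i, v i ≠ 0) (hvO : ∀ i, v i 1 ≠ 0)
    (A B G D' A' B' G' D'' : Polynomial ℂ)
    (h : IsParabolicHiggs n t v A B G D')
    (h' : IsParabolicHiggs n t v A' B' G' D'')
    (hγ : G = G') :
    A = A' ∧ B = B' ∧ D' = D'' := by
  subst hγ
  obtain ⟨hA, hB, -, hD, hres⟩ := h
  obtain ⟨hA', hB', -, hD', hres'⟩ := h'
  -- pointwise facts
  have key : ∀ i, A.eval (t i) = A'.eval (t i) ∧ B.eval (t i) = B'.eval (t i)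
      ∧ D'.eval (t i) = D''.eval (t i) := by
    intro i
    obtain ⟨hk, him⟩ := hres i
    obtain ⟨hk', him'⟩ := hres' i
    have e0 := congrFun hk 0
    have e1 := congrFun hk 1
    have e0' := congrFun hk' 0
    have e1' := congrFun hk' 1
    simp [Matrix.mulVec, dotProduct, Fin.sum_univ_two] at e0 e1 e0' e1'
    obtain ⟨c, hc⟩ := him ![1, 0]
    obtain ⟨c', hc'⟩ := him' ![1, 0]
    have f0 := congrFun hc 0
    have f1 := congrFun hc 1
    have f0' := congrFun hc' 0
    have f1' := congrFun hc' 1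
    simp [Matrix.mulVec, dotProduct, Fin.sum_univ_two] at f0 f1 f0' f1'
    have hv1 := hvO i
    -- A eval: A = c * v0, G = c * v1, so c = G/v1
    have hcc : c = c' := by
      have : c * v i 1 = c' * v i 1 := by rw [← f1, ← f1']
      exact mul_right_cancel₀ hv1 this
    have hAe : A.eval (t i) = A'.eval (t i) := by rw [f0, f0', hcc]
    have hBe : B.eval (t i) = B'.eval (t i) := by
      have : B.eval (t i) * v i 1 = B'.eval (t i) * v i 1 := by
        have h1 : B.eval (t i) * v i 1 = - (A.eval (t i) * v i 0) := by
          linear_combination e0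
        have h2 : B'.eval (t i) * v i 1 = - (A'.eval (t i) * v i 0) := by
          linear_combination e0'
        rw [h1, h2, hAe]
      exact mul_right_cancel₀ hv1 this
    have hDe : D'.eval (t i) = D''.eval (t i) := by
      have : D'.eval (t i) * v i 1 = D''.eval (t i) * v i 1 := by
        have h1 : D'.eval (t i) * v i 1 = - (G.eval (t i) * v i 0) := by
          linear_combination e1
        have h2 : D''.eval (t i) * v i 1 = - (G.eval (t i) * v i 0) := by
          linear_combination e1'
        rw [h1, h2]
      exact mul_right_cancel₀ hv1 this
    exact ⟨hAe, hBe, hDe⟩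
  have degsub : ∀ (f g : Polynomial ℂ), degLE f ((n:ℤ)-1) → degLE g ((n:ℤ)-1) →
      degLE (f - g) ((n:ℤ)-1) := by
    intro f g hf hg k hk
    simp [Polynomial.coeff_sub, hf k hk, hg k hk]
  have weaken : ∀ (f : Polynomial ℂ), degLE f ((n:ℤ)-2) → degLE f ((n:ℤ)-1) := by
    intro f hf k hk; exact hf k (by omega)
  have hAeq : A = A' := by
    have := vanish_aux n t ht (A - A') (degsub _ _ (weaken _ hA) (weaken _ hA'))
      (fun i => by simp [(key i).1])
    linear_combination this
  have hBeq : B = B' := by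
    have := vanish_aux n t ht (B - B') (degsub _ _ hB hB')
      (fun i => by simp [(key i).2.1])
    linear_combination this
  have hDeq : D' = D'' := by
    have := vanish_aux n t ht (D' - D'') (degsub _ _ (weaken _ hD) (weaken _ hD'))
      (fun i => by simp [(key i).2.2])
    linear_combination this
  exact ⟨hAeq, hBeq, hDeq⟩
end

section
/- For n = 5, with p_1 = ρ(b_1 - q_2 b_0)/(b_2 - (q_1+q_2)b_1 + q_1 q_2 b_0) and p_2 = ρ(b_1 - q_1 b_0)/(b_2 - (q_1+q_2)b_1 + q_1 q_2 b_0), and (a_2 : a_1 : a_0) = (1 : -q_1-q_2 : q_1 q_2), the 1-form identity p_1 dq_1 + p_2 dq_2 = ρ (a_2 db_2 + a_1 db_1 + a_0 db_0)/(a_2 b_2 + a_1 b_1 + a_0 b_0) - ρ d log(a_2 b_2 + a_1 b_1 + a_0 b_0) + ρ da_2/a_2 holds; consequently dp_1 ∧ dq_1 + dp_2 ∧ dq_2 = ρ · d[(a_2 db_2 + a_1 db_1 + a_0 db_0)/(a_2 b_2 + a_1 b_1 + a_0 b_0)]. -/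
/-!
Coordinates on an open subset of `ℂ⁵`: `x 0 = q₁`, `x 1 = q₂`, `x 2 = b₀`,
`x 3 = b₁`, `x 4 = b₂`, with `(a₂, a₁, a₀) = (1, -(q₁+q₂), q₁q₂)` (so `da₂ = 0`
and the term `ρ da₂/a₂` vanishes in this normalization), and
`S = a₂b₂ + a₁b₁ + a₀b₀ = b₂ - (q₁+q₂)b₁ + q₁q₂b₀`.
1-forms are maps to `(Fin 5 → ℂ) →L[ℂ] ℂ`, the exterior derivative of a 1-form
`η` being the 2-form `(u,v) ↦ (fderiv η x) u v - (fderiv η x) v u`.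
-/

noncomputable section

/-- `S = a₂b₂ + a₁b₁ + a₀b₀`. -/
def Sfun : (Fin 5 → ℂ) → ℂ := fun x => x 4 - (x 0 + x 1) * x 3 + x 0 * x 1 * x 2

/-- `p₁ = ρ(b₁ - q₂b₀)/S`. -/
def p1f (ρ : ℂ) : (Fin 5 → ℂ) → ℂ := fun x => ρ * (x 3 - x 1 * x 2) / Sfun x

/-- `p₂ = ρ(b₁ - q₁b₀)/S`. -/
def p2f (ρ : ℂ) : (Fin 5 → ℂ) → ℂ := fun x => ρ * (x 3 - x 0 * x 2) / Sfun x

/-- The coordinate differential `dxᵢ`. -/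
def dx (i : Fin 5) : (Fin 5 → ℂ) →L[ℂ] ℂ := ContinuousLinearMap.proj i

/-- The 1-form `ω = p₁ dq₁ + p₂ dq₂`. -/
def ωf (ρ : ℂ) : (Fin 5 → ℂ) → ((Fin 5 → ℂ) →L[ℂ] ℂ) :=
  fun x => p1f ρ x • dx 0 + p2f ρ x • dx 1

/-- The 1-form `θ = (a₂ db₂ + a₁ db₁ + a₀ db₀)/S`. -/
def θf : (Fin 5 → ℂ) → ((Fin 5 → ℂ) →L[ℂ] ℂ) :=
  fun x => (Sfun x)⁻¹ • ((x 0 * x 1) • dx 2 + (-(x 0 + x 1)) • dx 3 + dx 4)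

/-! `ω = ρ θ - ρ S⁻¹ dS` holds identically. Where `S ≠ 0`, `S⁻¹ dS = d log S` is closed because
second derivatives are symmetric, so `dω = ρ dθ`. -/

section LogDifferential

variable {𝕜 E : Type*} [RCLike 𝕜] [NormedAddCommGroup E] [NormedSpace 𝕜 E] {f : E → 𝕜} {x : E}

theorem ContDiffAt.differentiableAt_fderiv (hf : ContDiffAt 𝕜 2 f x) :
    DifferentiableAt 𝕜 (fderiv 𝕜 f) x :=
  (hf.fderiv_right (m := 1) (by norm_num)).differentiableAt one_ne_zero

theorem ContDiffAt.differentiableAt_inv_smul_fderiv (hf : ContDiffAt 𝕜 2 f x) (hx : f x ≠ 0) :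
    DifferentiableAt 𝕜 (fun y => (f y)⁻¹ • fderiv 𝕜 f y) x :=
  ((hf.differentiableAt two_ne_zero).inv hx).smul hf.differentiableAt_fderiv

/-- The derivative is `-f⁻² df ⊗ df + f⁻¹ d²f`, a sum of two symmetric bilinear maps. -/
theorem ContDiffAt.fderiv_inv_smul_fderiv_apply_comm (hf : ContDiffAt 𝕜 2 f x) (hx : f x ≠ 0)
    (u v : E) :
    fderiv 𝕜 (fun y => (f y)⁻¹ • fderiv 𝕜 f y) x u v
      = fderiv 𝕜 (fun y => (f y)⁻¹ • fderiv 𝕜 f y) x v u := by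
  have hd : HasFDerivAt (fun y => (f y)⁻¹ • fderiv 𝕜 f y) _ x :=
    ((hasDerivAt_inv hx).comp_hasFDerivAt x (hf.differentiableAt two_ne_zero).hasFDerivAt).smul
      hf.differentiableAt_fderiv.hasFDerivAt
  rw [hd.fderiv]
  simp only [add_apply, FunLike.coe_smul, Pi.smul_apply, ContinuousLinearMap.smulRight_apply,
    smul_eq_mul]
  rw [hf.isSymmSndFDerivAt (by simp) u v]
  ring

end LogDifferential

theorem contDiff_Sfun : ContDiff ℂ ⊤ Sfun := by
  unfold Sfun
  fun_prop

theorem fderiv_Sfun_apply (x v : Fin 5 → ℂ) :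
    fderiv ℂ Sfun x v = v 4 - (x 0 + x 1) * v 3 - (v 0 + v 1) * x 3
      + (v 0 * x 1 + x 0 * v 1) * x 2 + x 0 * x 1 * v 2 := by
  have hpr (i : Fin 5) : HasFDerivAt (fun y : Fin 5 → ℂ => y i) (dx i) x := hasFDerivAt_apply i x
  have hS : HasFDerivAt Sfun _ x :=
    ((hpr 4).sub (((hpr 0).add (hpr 1)).mul (hpr 3))).add (((hpr 0).mul (hpr 1)).mul (hpr 2))
  rw [hS.fderiv]
  simp [dx]
  ring

theorem differentiableAt_θf {x : Fin 5 → ℂ} (hx : Sfun x ≠ 0) : DifferentiableAt ℂ θf x := by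
  have hS : DifferentiableAt ℂ Sfun x := contDiff_Sfun.differentiable (by simp) x
  unfold θf
  fun_prop (disch := assumption)

/-- Both `ω` and `θ` carry the factor `S⁻¹`, so this holds even where `S = 0` (there `S⁻¹ = 0`). -/
theorem ωf_eq (ρ : ℂ) : ωf ρ = fun x => ρ • θf x - (ρ * (Sfun x)⁻¹) • fderiv ℂ Sfun x := by
  ext x v
  simp [ωf, θf, p1f, p2f, dx, fderiv_Sfun_apply]
  ring

theorem stmt14_general (ρ : ℂ) (x : Fin 5 → ℂ) (hx : Sfun x ≠ 0) :
    ωf ρ x = ρ • θf x - (ρ * (Sfun x)⁻¹) • fderiv ℂ Sfun x ∧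
    ∀ u v : Fin 5 → ℂ,
      fderiv ℂ (ωf ρ) x u v - fderiv ℂ (ωf ρ) x v u
        = ρ * (fderiv ℂ θf x u v - fderiv ℂ θf x v u) := by
  refine ⟨congrFun (ωf_eq ρ) x, fun u v => ?_⟩
  have hS : ContDiffAt ℂ 2 Sfun x := contDiff_Sfun.contDiffAt.of_le le_top
  have hω : HasFDerivAt (fun y => ρ • θf y - ρ • ((Sfun y)⁻¹ • fderiv ℂ Sfun y))
      (ρ • fderiv ℂ θf x - ρ • fderiv ℂ (fun y => (Sfun y)⁻¹ • fderiv ℂ Sfun y) x) x :=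
    ((differentiableAt_θf hx).hasFDerivAt.const_smul ρ).sub
      ((hS.differentiableAt_inv_smul_fderiv hx).hasFDerivAt.const_smul ρ)
  simp only [ωf_eq, mul_smul, hω.fderiv, sub_apply, FunLike.coe_smul, Pi.smul_apply, smul_eq_mul,
    hS.fderiv_inv_smul_fderiv_apply_comm hx u v]
  ring

/-- the 1-form identity
`p₁ dq₁ + p₂ dq₂ = ρ (a₂ db₂ + a₁ db₁ + a₀ db₀)/S - ρ dS/S (+ ρ da₂/a₂ = 0)`
holds where `S ≠ 0`; consequently
`dp₁ ∧ dq₁ + dp₂ ∧ dq₂ = ρ · d[(a₂ db₂ + a₁ db₁ + a₀ db₀)/S]`. -/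
theorem stmt14 (ρ : ℂ) (hρ : ρ ≠ 0) (x : Fin 5 → ℂ) (hx : Sfun x ≠ 0) :
    ωf ρ x = ρ • θf x - (ρ * (Sfun x)⁻¹) • fderiv ℂ Sfun x ∧
    ∀ u v : Fin 5 → ℂ,
      fderiv ℂ (ωf ρ) x u v - fderiv ℂ (ωf ρ) x v u
        = ρ * (fderiv ℂ θf x u v - fderiv ℂ θf x v u) :=
  stmt14_general ρ x hx

end
end
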